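/- arXiv:1407.7635 — 9 statements merged into one kernel-verified Lean document; each statement's English description precedes it below -/
import Mathlib

section
/- Local repetition lemma: Let d be a positive integer and let ε, δ ∈ (0,1). Then for every integer k with k ≥ d/(4·ε²·δ), every string s of length d^k is (d,ε,δ)-locally repetitive. -/
open Finset
open scoped Classical

/-- The average of the block of `s` of length `len` starting at position `j * len`. -/
noncomputable def blockAvg (s : ℕ → ℝ) (len j : ℕ) : ℝ :=
  (∑ i ∈ Finset.range len, s (j * len + i)) / len

/-- For a string of length `d ^ k`, the level-`ℓ` aligned block with index `j`
(of length `d ^ (k - ℓ)`) is `(d, ε)`-repetitive: the average of each of its `d`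
consecutive sub-blocks (which are level-`(ℓ+1)` aligned blocks) is within `ε`
of the block's average. -/
def blockRep (s : ℕ → ℝ) (d k : ℕ) (ε : ℝ) (ℓ j : ℕ) : Prop :=
  ∀ i ∈ Finset.range d,
    |blockAvg s (d ^ (k - ℓ)) j - blockAvg s (d ^ (k - (ℓ + 1))) (j * d + i)| ≤ ε

/-- The fraction of level-`ℓ` aligned blocks of `s` that are not `(d, ε)`-repetitive. -/
noncomputable def badFrac (s : ℕ → ℝ) (d k : ℕ) (ε : ℝ) (ℓ : ℕ) : ℝ :=
  (((Finset.range (d ^ ℓ)).filter (fun j => ¬ blockRep s d k ε ℓ j)).card : ℝ) / (d ^ ℓ : ℝ)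

/-!
Energy increment. Let `E ℓ` be the mean square of the level-`ℓ` block averages. Passing from
level `ℓ` to level `ℓ + 1` raises `E` by the average, over level-`ℓ` blocks, of the variance of
the averages of their `d` sub-blocks; a block that is not `(d, ε)`-repetitive has a sub-block
whose average is `ε`-far from the mean, so its variance is at least `ε² / d`. Since the entries
lie in `[0, 1]`, the total increment `E k - E 0` is a variance of `[0, 1]`-valued numbers, hence
at most `1 / 4`. So the bad fractions sum to at most `d / (4 ε²) ≤ δ k`.
-/

theorem Finset.sum_range_mul_eq_sum_sum {M : Type*} [AddCommMonoid M] (f : ℕ → M) (a b : ℕ) :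
    ∑ x ∈ range (a * b), f x = ∑ j ∈ range a, ∑ i ∈ range b, f (j * b + i) := by
  induction a with
  | zero => simp
  | succ n ih => rw [sum_range_succ, ← ih, Nat.succ_mul, sum_range_add]

section UniformVariance

variable {ι : Type*} (t : Finset ι) (a : ι → ℝ)

noncomputable def uniformVariance : ℝ :=
  (∑ i ∈ t, a i ^ 2) / #t - ((∑ i ∈ t, a i) / #t) ^ 2

theorem uniformVariance_eq_sum_sq_sub_mean :
    uniformVariance t a = (∑ i ∈ t, (a i - (∑ j ∈ t, a j) / #t) ^ 2) / #t := by
  rcases t.eq_empty_or_nonempty with rfl | ht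
  · simp [uniformVariance]
  have hcard : (#t : ℝ) ≠ 0 := by exact_mod_cast ht.card_pos.ne'
  simp only [uniformVariance, sub_sq, sum_add_distrib, sum_sub_distrib, ← sum_mul, ← mul_sum,
    sum_const, nsmul_eq_mul]
  field_simp
  ring

theorem uniformVariance_nonneg : 0 ≤ uniformVariance t a := by
  rw [uniformVariance_eq_sum_sq_sub_mean]
  positivity

variable {t} in
theorem sq_sub_mean_le_card_mul_uniformVariance {i : ι} (hi : i ∈ t) :
    (a i - (∑ j ∈ t, a j) / #t) ^ 2 ≤ #t * uniformVariance t a := by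
  rcases t.eq_empty_or_nonempty with rfl | ht
  · simp at hi
  have hcard : (#t : ℝ) ≠ 0 := by exact_mod_cast ht.card_pos.ne'
  rw [uniformVariance_eq_sum_sq_sub_mean, mul_div_cancel₀ _ hcard]
  exact single_le_sum (f := fun i ↦ (a i - (∑ j ∈ t, a j) / #t) ^ 2)
    (fun _ _ ↦ sq_nonneg _) hi

variable {t a} in
theorem uniformVariance_le_one_div_four (ha : ∀ i ∈ t, a i ∈ Set.Icc (0 : ℝ) 1) :
    uniformVariance t a ≤ 1 / 4 := by
  set μ := (∑ i ∈ t, a i) / #t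
  have hμ0 : 0 ≤ μ := div_nonneg (sum_nonneg fun i hi ↦ (ha i hi).1) (Nat.cast_nonneg _)
  have hsq : (∑ i ∈ t, a i ^ 2) / #t ≤ μ := by
    refine div_le_div_of_nonneg_right (sum_le_sum fun i hi ↦ ?_) (Nat.cast_nonneg _)
    obtain ⟨h0, h1⟩ := ha i hi
    nlinarith
  have hle : uniformVariance t a ≤ μ - μ ^ 2 := by
    simp only [uniformVariance]
    linarith
  nlinarith [sq_nonneg (μ - 1 / 2)]

end UniformVariance

theorem blockAvg_mul (s : ℕ → ℝ) (d L j : ℕ) :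
    blockAvg s (d * L) j = (∑ i ∈ range d, blockAvg s L (j * d + i)) / d := by
  simp only [blockAvg, sum_range_mul_eq_sum_sum, ← sum_div, div_div, Nat.cast_mul]
  congr 1
  · refine sum_congr rfl fun i _ ↦ sum_congr rfl fun q _ ↦ ?_
    ring_nf
  · ring

noncomputable def energy (s : ℕ → ℝ) (d k ℓ : ℕ) : ℝ :=
  (∑ j ∈ range (d ^ ℓ), blockAvg s (d ^ (k - ℓ)) j ^ 2) / d ^ ℓ

section Level

variable (s : ℕ → ℝ) {d k ℓ : ℕ}

theorem blockAvg_eq_mean_subblocks (hℓ : ℓ < k) (j : ℕ) :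
    blockAvg s (d ^ (k - ℓ)) j =
      (∑ i ∈ range d, blockAvg s (d ^ (k - (ℓ + 1))) (j * d + i)) / d := by
  rw [← blockAvg_mul, ← pow_succ', Nat.sub_add_eq, Nat.sub_add_cancel (Nat.sub_pos_of_lt hℓ)]

theorem energy_succ_sub_energy (hℓ : ℓ < k) :
    energy s d k (ℓ + 1) - energy s d k ℓ =
      (∑ j ∈ range (d ^ ℓ),
        uniformVariance (range d) fun i ↦ blockAvg s (d ^ (k - (ℓ + 1))) (j * d + i)) / d ^ ℓ := by
  have hfine : energy s d k (ℓ + 1) = (∑ j ∈ range (d ^ ℓ),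
      (∑ i ∈ range d, blockAvg s (d ^ (k - (ℓ + 1))) (j * d + i) ^ 2) / d) / d ^ ℓ := by
    rw [energy, pow_succ, sum_range_mul_eq_sum_sum, ← sum_div, div_div, pow_succ']
  rw [hfine, energy, div_sub_div_same, ← sum_sub_distrib]
  simp only [blockAvg_eq_mean_subblocks s hℓ, uniformVariance, card_range]

theorem sq_le_mul_uniformVariance_of_not_blockRep {ε : ℝ} (hε : 0 ≤ ε) (hℓ : ℓ < k) {j : ℕ}
    (hj : ¬ blockRep s d k ε ℓ j) :
    ε ^ 2 ≤ d * uniformVariance (range d) fun i ↦ blockAvg s (d ^ (k - (ℓ + 1))) (j * d + i) := by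
  simp only [blockRep, not_forall, not_le] at hj
  obtain ⟨i, hi, hfar⟩ := hj
  rw [blockAvg_eq_mean_subblocks s hℓ, abs_sub_comm] at hfar
  calc ε ^ 2 ≤ |_| ^ 2 := pow_le_pow_left₀ hε hfar.le 2
    _ = _ := sq_abs _
    _ ≤ _ := by
      simpa using sq_sub_mean_le_card_mul_uniformVariance (fun i ↦ blockAvg s _ (j * d + i)) hi

theorem badFrac_mul_sq_le {ε : ℝ} (hε : 0 ≤ ε) (hℓ : ℓ < k) :
    badFrac s d k ε ℓ * ε ^ 2 ≤ d * (energy s d k (ℓ + 1) - energy s d k ℓ) := by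
  rw [energy_succ_sub_energy s hℓ, badFrac, div_mul_eq_mul_div, mul_div_assoc', mul_sum]
  refine div_le_div_of_nonneg_right ?_ (by positivity)
  calc _ = ∑ j ∈ range (d ^ ℓ) with ¬ blockRep s d k ε ℓ j, ε ^ 2 := by
        rw [sum_const, nsmul_eq_mul]
    _ ≤ ∑ j ∈ range (d ^ ℓ) with ¬ blockRep s d k ε ℓ j, (d : ℝ) *
          uniformVariance (range d) fun i ↦ blockAvg s (d ^ (k - (ℓ + 1))) (j * d + i) :=
        sum_le_sum fun j hj ↦ sq_le_mul_uniformVariance_of_not_blockRep s hε hℓ (mem_filter.1 hj).2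
    _ ≤ _ := sum_le_sum_of_subset_of_nonneg (filter_subset _ _) fun _ _ _ ↦
        mul_nonneg (Nat.cast_nonneg _) (uniformVariance_nonneg _ _)

end Level

theorem energy_sub_energy_zero_le {s : ℕ → ℝ} {d k : ℕ}
    (hs : ∀ i < d ^ k, s i ∈ Set.Icc (0 : ℝ) 1) :
    energy s d k k - energy s d k 0 ≤ 1 / 4 := by
  have hvar : energy s d k k - energy s d k 0 = uniformVariance (range (d ^ k)) s := by
    simp [energy, uniformVariance, blockAvg]
  rw [hvar]
  exact uniformVariance_le_one_div_four fun i hi ↦ hs i (mem_range.1 hi)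

theorem local_repetition_lemma_general (d : ℕ) (ε δ : ℝ)
    (hε : ε ∈ Set.Ioo (0 : ℝ) 1) (hδ : δ ∈ Set.Ioo (0 : ℝ) 1)
    (k : ℕ) (hk : (d : ℝ) / (4 * ε ^ 2 * δ) ≤ k)
    (s : ℕ → ℝ) (hs : ∀ i < d ^ k, s i ∈ Set.Icc (0 : ℝ) 1) :
    (1 / k : ℝ) * ∑ ℓ ∈ Finset.range k, badFrac s d k ε ℓ ≤ δ := by
  obtain ⟨hε, -⟩ := hε
  obtain ⟨hδ, -⟩ := hδ
  have htotal : (∑ ℓ ∈ range k, badFrac s d k ε ℓ) * ε ^ 2 ≤ d / 4 :=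
    calc (∑ ℓ ∈ range k, badFrac s d k ε ℓ) * ε ^ 2
        ≤ ∑ ℓ ∈ range k, d * (energy s d k (ℓ + 1) - energy s d k ℓ) := by
          rw [sum_mul]
          exact sum_le_sum fun ℓ hℓ ↦ badFrac_mul_sq_le s hε.le (mem_range.1 hℓ)
      _ = d * (energy s d k k - energy s d k 0) := by rw [← mul_sum, sum_range_sub]
      _ ≤ d / 4 := (mul_le_mul_of_nonneg_left (energy_sub_energy_zero_le hs)
          (Nat.cast_nonneg d)).trans_eq (mul_one_div _ _)
  have hbound : ∑ ℓ ∈ range k, badFrac s d k ε ℓ ≤ δ * k := by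
    refine le_of_mul_le_mul_right (htotal.trans ?_) (pow_pos hε 2)
    rw [div_le_iff₀ (by positivity)] at hk
    linarith
  calc (1 / k : ℝ) * ∑ ℓ ∈ range k, badFrac s d k ε ℓ ≤ 1 / k * (δ * k) := by gcongr
    _ = δ * (k / k) := by ring
    _ ≤ δ := mul_le_of_le_one_right hδ.le (div_self_le_one _)

/-- **Local repetition lemma.** For every positive integer `d` and `ε, δ ∈ (0,1)`,
for every integer `k ≥ d / (4 ε² δ)`, every string of length `d ^ k` (with entries
in `[0,1]`) is `(d, ε, δ)`-locally repetitive. -/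
theorem local_repetition_lemma (d : ℕ) (hd : 0 < d) (ε δ : ℝ)
    (hε : ε ∈ Set.Ioo (0 : ℝ) 1) (hδ : δ ∈ Set.Ioo (0 : ℝ) 1)
    (k : ℕ) (hk : (d : ℝ) / (4 * ε ^ 2 * δ) ≤ k)
    (s : ℕ → ℝ) (hs : ∀ i < d ^ k, s i ∈ Set.Icc (0 : ℝ) 1) :
    (1 / k : ℝ) * ∑ ℓ ∈ Finset.range k, badFrac s d k ε ℓ ≤ δ :=
  local_repetition_lemma_general d ε δ hε hδ k hk s hs
end

section
/- For every positive integer T, the width of the Multi-scale Random Walk parent function ρ on {1,…,T}, namely max_{1≤t≤T} |cut(t)|, is at most ⌊log₂ T⌋ + 1. -/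
/-!
An element `s` of `cut(t)` satisfies `s - 2^δ(s) < t ≤ s`, so it is the unique multiple of
`2^δ(s)` in the window `[t, t + 2^δ(s))`. Hence `δ` is injective on `cut(t)`, and it takes
values in `{0, …, ⌊log₂ T⌋}` because `2^δ(s) ≤ s ≤ T`.
-/

/-- The Multi-scale Random Walk parent function: `ρ(t) = t - 2^{δ(t)}` where
`δ(t)` is the largest `i` with `2^i ∣ t` (the 2-adic valuation of `t`). -/
def mrwRho (t : ℕ) : ℕ := t - 2 ^ (padicValNat 2 t)

open Finset

theorem Nat.eq_of_dvd_of_mem_Ico {d a b t : ℕ} (hda : d ∣ a) (hdb : d ∣ b)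
    (ha : a ∈ Ico t (t + d)) (hb : b ∈ Ico t (t + d)) : a = b := by
  rw [mem_Ico] at ha hb
  have hab : a ≡ b [MOD d] :=
    (Nat.modEq_zero_iff_dvd.2 hda).trans (Nat.modEq_zero_iff_dvd.2 hdb).symm
  exact hab.eq_of_abs_lt (abs_sub_lt_iff.2 ⟨by omega, by omega⟩)

def mrwCut (T t : ℕ) : Finset ℕ :=
  (Icc 1 T).filter (fun s => mrwRho s < t ∧ t ≤ s)

theorem mem_Ico_of_mem_mrwCut {T t s : ℕ} (hs : s ∈ mrwCut T t) :
    s ∈ Ico t (t + 2 ^ padicValNat 2 s) := by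
  rw [mrwCut, mem_filter, mrwRho] at hs
  rw [mem_Ico]
  omega

theorem padicValNat_injOn_mrwCut (T t : ℕ) : Set.InjOn (padicValNat 2) (mrwCut T t) := by
  intro a ha b hb hab
  exact Nat.eq_of_dvd_of_mem_Ico pow_padicValNat_dvd (hab ▸ pow_padicValNat_dvd)
    (mem_Ico_of_mem_mrwCut ha) (hab ▸ mem_Ico_of_mem_mrwCut hb)

theorem padicValNat_mapsTo_mrwCut (T t : ℕ) :
    Set.MapsTo (padicValNat 2) (mrwCut T t) (range (Nat.log 2 T + 1)) := by
  intro s hs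
  have hsT : s ≤ T := (mem_Icc.1 (mem_filter.1 hs).1).2
  rw [coe_range, Set.mem_Iio, Nat.lt_succ_iff]
  exact (padicValNat_le_nat_log s).trans (Nat.log_mono_right hsT)

theorem mrw_width_le_general (T : ℕ) (t : ℕ) :
    ((Finset.Icc 1 T).filter (fun s => mrwRho s < t ∧ t ≤ s)).card ≤ Nat.log 2 T + 1 :=
  (card_le_card_of_injOn _ (padicValNat_mapsTo_mrwCut T t)
    (padicValNat_injOn_mrwCut T t)).trans_eq (card_range _)

/-- The width of the MRW parent function on `{1, …, T}` is at most `⌊log₂ T⌋ + 1`: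
for every `t ∈ {1, …, T}`, the cut `{s ∈ {1, …, T} : ρ(s) < t ≤ s}` has at most
`⌊log₂ T⌋ + 1` elements. -/
theorem mrw_width_le (T : ℕ) (hT : 1 ≤ T) (t : ℕ) (ht : 1 ≤ t) (htT : t ≤ T) :
    ((Finset.Icc 1 T).filter (fun s => mrwRho s < t ∧ t ≤ s)).card ≤ Nat.log 2 T + 1 :=
  mrw_width_le_general T t
end

section
/- For every choice of rewards r(0), r(1) ∈ [0,1] with r(0) − r(1) = Δ, the probability row vector μ = (p/(p+e^{−η·Δ}), e^{−η·Δ}/(p+e^{−η·Δ})) is stationary for the transition matrix Q(r): μ·Q(r) = μ. -/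
/-- The transition matrix of the exponential-switching dynamics: with
`q₀ = (1/2)e^{-η r₀}` and `q₁ = (1/2)e^{-η r₁}`, the first row is `(1 - q₀, q₀)`
and the second row is `(p q₁, 1 - p q₁)`. -/
noncomputable def Qmat (p η r0 r1 : ℝ) : Matrix (Fin 2) (Fin 2) ℝ :=
  !![1 - (1 / 2) * Real.exp (-η * r0), (1 / 2) * Real.exp (-η * r0);
     p * ((1 / 2) * Real.exp (-η * r1)), 1 - p * ((1 / 2) * Real.exp (-η * r1))]

/-- The probability row vector `μ = (p/(p + e^{-ηΔ}), e^{-ηΔ}/(p + e^{-ηΔ}))`. -/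
noncomputable def muStat (p η Δ : ℝ) : Fin 2 → ℝ :=
  ![p / (p + Real.exp (-η * Δ)), Real.exp (-η * Δ) / (p + Real.exp (-η * Δ))]

/-!
Both `Q(r)` and `μ` live on two states, and a distribution on a two-state chain is
stationary as soon as the flows between the states balance: `μ₀ q₀ = μ₁ p q₁`.
Since `e^{-η r₀} = e^{-η Δ} e^{-η r₁}`, both flows equal `p q₀ / (p + e^{-η Δ})`.
-/

open Matrix

theorem Matrix.vecMul_twoState_eq_self {R : Type*} [CommRing R] {a b x y : R}
    (hbalance : x * a = y * b) :
    vecMul ![x, y] !![1 - a, a; b, 1 - b] = ![x, y] := by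
  ext i
  fin_cases i <;>
    simp only [vecMul, dotProduct, Fin.sum_univ_two, Fin.zero_eta, Fin.mk_one, Fin.isValue,
      of_apply, cons_val', cons_val_zero, cons_val_one, cons_val_fin_one]
  · linear_combination -hbalance
  · linear_combination hbalance

theorem muStat_stationary_general (p η Δ r0 r1 : ℝ)
    (hgap : r0 - r1 = Δ) :
    Matrix.vecMul (muStat p η Δ) (Qmat p η r0 r1) = muStat p η Δ := by
  have hexp : Real.exp (-η * r0) = Real.exp (-η * Δ) * Real.exp (-η * r1) := by
    rw [← Real.exp_add, ← hgap]
    ring_nf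
  apply Matrix.vecMul_twoState_eq_self
  rw [hexp]
  ring

/-- For any rewards `r₀, r₁ ∈ [0,1]` with `r₀ - r₁ = Δ`, the row vector `μ` is
stationary for the transition matrix `Q(r)`: `μ · Q(r) = μ`. -/
theorem muStat_stationary (p η Δ r0 r1 : ℝ)
    (hp : p ∈ Set.Ioc (0 : ℝ) 1) (hη : 0 < η) (hΔ : Δ ∈ Set.Icc (0 : ℝ) 1)
    (hr0 : r0 ∈ Set.Icc (0 : ℝ) 1) (hr1 : r1 ∈ Set.Icc (0 : ℝ) 1)
    (hgap : r0 - r1 = Δ) :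
    Matrix.vecMul (muStat p η Δ) (Qmat p η r0 r1) = muStat p η Δ :=
  muStat_stationary_general p η Δ r0 r1 hgap
end

section
/- Let k be a positive integer and ε > 0 with k·ε ≤ 1, and let Q be a k×k row-stochastic matrix (nonnegative entries, each row summing to 1) all of whose entries are at least ε. Then for any two probability row vectors μ and ν, ‖μ·Q − ν·Q‖₁ ≤ (1 − k·ε)·‖μ − ν‖₁. -/
/-- Contraction in total variation: if `Q` is a `k × k` row-stochastic matrix all
of whose entries are at least `ε` (with `kε ≤ 1`), then for any two probability
row vectors `μ` and `ν`, `‖μQ - νQ‖₁ ≤ (1 - kε) ‖μ - ν‖₁`. -/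
theorem stochastic_matrix_contraction (k : ℕ) (hk : 0 < k) (ε : ℝ) (hε : 0 < ε)
    (hkε : (k : ℝ) * ε ≤ 1)
    (Q : Matrix (Fin k) (Fin k) ℝ)
    (hQpos : ∀ i j, ε ≤ Q i j)
    (hQrow : ∀ i, ∑ j, Q i j = 1)
    (μ ν : Fin k → ℝ)
    (hμ0 : ∀ i, 0 ≤ μ i) (hμ1 : ∑ i, μ i = 1)
    (hν0 : ∀ i, 0 ≤ ν i) (hν1 : ∑ i, ν i = 1) :
    ∑ j, |Matrix.vecMul μ Q j - Matrix.vecMul ν Q j| ≤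
      (1 - (k : ℝ) * ε) * ∑ i, |μ i - ν i| := by
  have key : ∀ j, |Matrix.vecMul μ Q j - Matrix.vecMul ν Q j|
      ≤ ∑ i, |μ i - ν i| * (Q i j - ε) := by
    intro j
    have h1 : Matrix.vecMul μ Q j - Matrix.vecMul ν Q j
        = ∑ i, (μ i - ν i) * (Q i j - ε) := by
      have hz : ∑ i, (μ i - ν i) * ε = 0 := by
        rw [← Finset.sum_mul, Finset.sum_sub_distrib, hμ1, hν1]
        ring
      simp only [Matrix.vecMul, dotProduct, mul_sub]
      rw [Finset.sum_sub_distrib, hz, sub_zero, ← Finset.sum_sub_distrib]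
      congr 1; ext i; ring
    rw [h1]
    refine (Finset.abs_sum_le_sum_abs _ _).trans (Finset.sum_le_sum fun i _ => ?_)
    rw [abs_mul, abs_of_nonneg (by linarith [hQpos i j] : (0:ℝ) ≤ Q i j - ε)]
  calc ∑ j, |Matrix.vecMul μ Q j - Matrix.vecMul ν Q j|
      ≤ ∑ j, ∑ i, |μ i - ν i| * (Q i j - ε) := Finset.sum_le_sum fun j _ => key j
    _ = ∑ i, |μ i - ν i| * (1 - (k : ℝ) * ε) := by
        rw [Finset.sum_comm]
        refine Finset.sum_congr rfl fun i _ => ?_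
        rw [← Finset.mul_sum, Finset.sum_sub_distrib, hQrow i]
        simp [mul_comm]
    _ = (1 - (k : ℝ) * ε) * ∑ i, |μ i - ν i| := by
        rw [Finset.mul_sum]; exact Finset.sum_congr rfl fun i _ => mul_comm _ _
end

section
/- Let r_1, …, r_T be reward pairs with r_t(0), r_t(1) ∈ [0,1] and r_t(0) − r_t(1) = Δ for every t, let μ¹ be an arbitrary probability row vector on two states, and define μ^{t+1} = μ^t·Q(r_t). Then the expected regret of the exponential-switching dynamics satisfies Δ·Σ_{t=1}^T μ^t(1) ≤ 2·e^{η}/p + T/(2·η·p), where μ^t(1) denotes the second coordinate of μ^t. -/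
lemma two_mul_le_exp (z : ℝ) (hz : 0 ≤ z) : 2 * z ≤ Real.exp z := by
  have h1 : z/2 + 1 ≤ Real.exp (z/2) := Real.add_one_le_exp _
  have h2 : Real.exp (z/2) * Real.exp (z/2) = Real.exp z := by
    rw [← Real.exp_add]; ring_nf
  nlinarith [sq_nonneg (1 - z/2), mul_le_mul h1 h1 (by linarith) (Real.exp_pos _).le]

lemma sum_Icc_pow_eq (x : ℝ) (n : ℕ) :
    ∑ t ∈ Finset.Icc 1 n, x ^ (t - 1) = ∑ i ∈ Finset.range n, x ^ i := by
  induction n with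
  | zero => simp
  | succ m ih =>
    rw [Finset.sum_Icc_succ_top (by omega), Finset.sum_range_succ, ih]
    simp

set_option maxHeartbeats 1600000 in
/-- The expected regret of the exponential-switching dynamics against a consistent
adversary with gap `Δ` satisfies `Δ · Σ_{t=1}^T μ^t(1) ≤ 2 e^η / p + T / (2 η p)`. -/
theorem exp_switching_regret (p η Δ : ℝ)
    (hp : p ∈ Set.Ioc (0 : ℝ) 1) (hη : 0 < η) (hΔ : Δ ∈ Set.Icc (0 : ℝ) 1)
    (T : ℕ) (r0 r1 : ℕ → ℝ)
    (hr : ∀ t, 1 ≤ t → t ≤ T →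
      r0 t ∈ Set.Icc (0 : ℝ) 1 ∧ r1 t ∈ Set.Icc (0 : ℝ) 1 ∧ r0 t - r1 t = Δ)
    (μseq : ℕ → Fin 2 → ℝ)
    (hinit : (∀ i, 0 ≤ μseq 1 i) ∧ ∑ i, μseq 1 i = 1)
    (hrec : ∀ t, 1 ≤ t → t ≤ T →
      μseq (t + 1) = Matrix.vecMul (μseq t) (Qmat p η (r0 t) (r1 t))) :
    Δ * ∑ t ∈ Finset.Icc 1 T, μseq t 1 ≤
      2 * Real.exp η / p + T / (2 * η * p) := by
  obtain ⟨hp0, hp1⟩ := hp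
  obtain ⟨hΔ0, hΔ1⟩ := hΔ
  have hE0 : 0 < Real.exp (-η * Δ) := Real.exp_pos _
  have hE1 : Real.exp (-η * Δ) ≤ 1 := Real.exp_le_one_iff.mpr (by nlinarith)
  set E : ℝ := Real.exp (-η * Δ) with hEdef
  have hexp0 : 0 < Real.exp (-η) := Real.exp_pos _
  have hexp1 : Real.exp (-η) ≤ 1 := Real.exp_le_one_iff.mpr (by linarith)
  have ha0 : (0:ℝ) ≤ 1 - p * Real.exp (-η) / 2 := by nlinarith
  have ha1 : 1 - p * Real.exp (-η) / 2 < 1 := by nlinarith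
  set a : ℝ := 1 - p * Real.exp (-η) / 2 with hadef
  have hEp : 0 < E + p := by linarith
  have hxs0 : (0:ℝ) ≤ E / (E + p) := by positivity
  have hxs1 : E / (E + p) ≤ 1 := by rw [div_le_one hEp]; linarith
  set xs : ℝ := E / (E + p) with hxsdef
  have hfix : xs * (E + p) = E := div_mul_cancel₀ _ hEp.ne'
  -- main induction
  have key : ∀ t, 1 ≤ t → t ≤ T + 1 →
      μseq t 0 + μseq t 1 = 1 ∧ μseq t 1 - xs ≤ a ^ (t - 1) := by
    intro t ht
    induction t, ht using Nat.le_induction with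
    | base =>
      intro _
      have hs := hinit.2
      rw [Fin.sum_univ_two] at hs
      refine ⟨hs, ?_⟩
      have := hinit.1 0
      simp only [Nat.sub_self, pow_zero]
      linarith
    | succ n hn ih =>
      intro hle
      have hnT : n ≤ T := by omega
      obtain ⟨ihs, ihb⟩ := ih (by omega)
      have hq := hrec n hn hnT
      obtain ⟨hr0, hr1, hgap⟩ := hr n hn hnT
      have hq1pos : (0:ℝ) < (1/2) * Real.exp (-η * r1 n) := by positivity
      have hq1half : (1/2) * Real.exp (-η * r1 n) ≤ 1/2 := by
        have : Real.exp (-η * r1 n) ≤ 1 :=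
          Real.exp_le_one_iff.mpr (by nlinarith [hr1.1])
        linarith
      have hq1low : Real.exp (-η) / 2 ≤ (1/2) * Real.exp (-η * r1 n) := by
        have : Real.exp (-η) ≤ Real.exp (-η * r1 n) :=
          Real.exp_le_exp.mpr (by nlinarith [hr1.2])
        linarith
      set q1v : ℝ := (1/2) * Real.exp (-η * r1 n) with hq1def
      have hq0 : (1/2) * Real.exp (-η * r0 n) = E * q1v := by
        have hr0eq : r0 n = r1 n + Δ := by linarith
        rw [hq1def, hEdef, hr0eq, show -η * (r1 n + Δ) = -η * Δ + -η * r1 n by ring,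
          Real.exp_add]; ring
      have h0 : μseq (n+1) 0 =
          μseq n 0 * (1 - (1/2) * Real.exp (-η * r0 n)) + μseq n 1 * (p * q1v) := by
        rw [hq]; simp [Qmat, Matrix.vecMul, dotProduct, Fin.sum_univ_two, hq1def]
      have h1 : μseq (n+1) 1 =
          μseq n 0 * ((1/2) * Real.exp (-η * r0 n)) + μseq n 1 * (1 - p * q1v) := by
        rw [hq]; simp [Qmat, Matrix.vecMul, dotProduct, Fin.sum_univ_two, hq1def]
      constructor
      · have : μseq (n+1) 0 + μseq (n+1) 1 = μseq n 0 + μseq n 1 := by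
          rw [h0, h1]; ring
        linarith
      · have hμ0 : μseq n 0 = 1 - μseq n 1 := by linarith
        have hstep : μseq (n+1) 1 - xs = (1 - (E + p) * q1v) * (μseq n 1 - xs) := by
          rw [h1, hq0, hμ0]; linear_combination (-q1v) * hfix
        have hc0 : (0:ℝ) ≤ 1 - (E + p) * q1v := by
          have := mul_le_mul (show E + p ≤ 2 by linarith) hq1half hq1pos.le
            (by norm_num : (0:ℝ) ≤ 2)
          linarith
        have hca : 1 - (E + p) * q1v ≤ a := by
          have h1' : p * (Real.exp (-η) / 2) ≤ p * q1v :=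
            mul_le_mul_of_nonneg_left hq1low hp0.le
          have h2' : p * q1v ≤ (E + p) * q1v :=
            mul_le_mul_of_nonneg_right (by linarith) hq1pos.le
          rw [hadef]; linarith
        have hgoal : (1 - (E + p) * q1v) * (μseq n 1 - xs) ≤ a ^ n := by
          rcases le_or_gt (μseq n 1 - xs) 0 with h | h
          · have h1' : (1 - (E + p) * q1v) * (μseq n 1 - xs) ≤ 0 :=
              mul_nonpos_of_nonneg_of_nonpos hc0 h
            have h2' : (0:ℝ) ≤ a ^ n := pow_nonneg ha0 n
            linarith
          · have h1' : (1 - (E + p) * q1v) * (μseq n 1 - xs) ≤ a * a ^ (n - 1) :=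
              mul_le_mul hca ihb h.le ha0
            have h2' : a * a ^ (n - 1) = a ^ n := by
              rw [← pow_succ']; congr 1; omega
            linarith
        simp only [Nat.add_sub_cancel]
        linarith [hstep, hgoal]
  -- sum bound
  have h1a : 0 < 1 - a := by rw [hadef]; nlinarith
  have hgeom : ∑ t ∈ Finset.Icc 1 T, a ^ (t - 1) ≤ 1 / (1 - a) := by
    have hre : ∑ t ∈ Finset.Icc 1 T, a ^ (t - 1) = ∑ i ∈ Finset.range T, a ^ i := by
      exact sum_Icc_pow_eq a T
    rw [hre, geom_sum_eq (by linarith : a ≠ 1)]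
    have hpow0 : (0:ℝ) ≤ a ^ T := pow_nonneg ha0 T
    have hdiv : (a ^ T - 1) / (a - 1) = (1 - a ^ T) / (1 - a) := by
      rw [← neg_div_neg_eq]; ring_nf
    rw [hdiv]
    exact (div_le_div_iff_of_pos_right h1a).mpr (by linarith)
  have hbound : ∀ t ∈ Finset.Icc 1 T, μseq t 1 ≤ xs + a ^ (t - 1) := by
    intro t ht
    rw [Finset.mem_Icc] at ht
    have := (key t ht.1 (by omega)).2
    linarith
  have hsum : ∑ t ∈ Finset.Icc 1 T, μseq t 1 ≤ T * xs + 1 / (1 - a) := by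
    calc ∑ t ∈ Finset.Icc 1 T, μseq t 1
        ≤ ∑ t ∈ Finset.Icc 1 T, (xs + a ^ (t - 1)) := Finset.sum_le_sum hbound
      _ = T * xs + ∑ t ∈ Finset.Icc 1 T, a ^ (t - 1) := by
          rw [Finset.sum_add_distrib, Finset.sum_const, Nat.card_Icc]
          simp [nsmul_eq_mul]
      _ ≤ T * xs + 1 / (1 - a) := by linarith
  -- two key numeric bounds
  have hxsb : Δ * xs ≤ 1 / (2 * η * p) := by
    have h2z : 2 * (η * Δ) ≤ Real.exp (η * Δ) := two_mul_le_exp _ (by positivity)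
    have hEe : E * Real.exp (η * Δ) = 1 := by
      rw [hEdef, ← Real.exp_add, show -η * Δ + η * Δ = 0 by ring, Real.exp_zero]
    have hΔE : Δ * E ≤ 1 / (2 * η) := by
      rw [le_div_iff₀ (by positivity)]
      calc Δ * E * (2 * η) = (2 * (η * Δ)) * E := by ring
        _ ≤ Real.exp (η * Δ) * E := mul_le_mul_of_nonneg_right h2z hE0.le
        _ = 1 := by rw [mul_comm]; exact hEe
    have hΔE0 : 0 ≤ Δ * E := by positivity
    calc Δ * xs = (Δ * E) / (E + p) := by rw [hxsdef]; ring
      _ ≤ (Δ * E) / p := by gcongr; linarith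
      _ ≤ (1 / (2 * η)) / p := by gcongr
      _ = 1 / (2 * η * p) := by rw [div_div]
  have hΔinv : Δ * (1 / (1 - a)) ≤ 2 * Real.exp η / p := by
    have hone : 1 - a = p * Real.exp (-η) / 2 := by rw [hadef]; ring
    have hval : 1 / (1 - a) = 2 * Real.exp η / p := by
      rw [hone, Real.exp_neg]
      field_simp
    rw [hval]
    have hpos : 0 ≤ 2 * Real.exp η / p := by positivity
    nlinarith
  have hfin : Δ * ∑ t ∈ Finset.Icc 1 T, μseq t 1 ≤ Δ * (T * xs + 1 / (1 - a)) :=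
    mul_le_mul_of_nonneg_left hsum hΔ0
  have hT : (0:ℝ) ≤ (T:ℝ) := Nat.cast_nonneg T
  have hTx : (T:ℝ) * (Δ * xs) ≤ (T:ℝ) * (1 / (2 * η * p)) :=
    mul_le_mul_of_nonneg_left hxsb hT
  have hTe : (T:ℝ) * (1 / (2 * η * p)) = (T:ℝ) / (2 * η * p) := by ring
  nlinarith [hfin, hΔinv, hTx]
end

section
/- Let T ≥ 2 be an integer and set η = (1/2)·ln T. Let r_1, …, r_T be reward pairs with r_t(0), r_t(1) ∈ [0,1] and r_t(0) − r_t(1) = Δ for every t, let μ¹ be an arbitrary probability row vector on two states, and define μ^{t+1} = μ^t·Q(r_t). Then Δ·Σ_{t=1}^T μ^t(1) ≤ (1/p)·(2·√T + T/ln T), where μ^t(1) denotes the second coordinate of μ^t. -/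
set_option maxHeartbeats 1600000 in
/-- With the tuning `η = (1/2) ln T`, the expected regret of the
exponential-switching dynamics against a consistent adversary with gap `Δ`
satisfies `Δ · Σ_{t=1}^T μ^t(1) ≤ (1/p)(2√T + T / ln T)`. -/
theorem exp_switching_regret_tuned (p Δ : ℝ)
    (hp : p ∈ Set.Ioc (0 : ℝ) 1) (hΔ : Δ ∈ Set.Icc (0 : ℝ) 1)
    (T : ℕ) (hT : 2 ≤ T) (η : ℝ) (hη : η = (1 / 2) * Real.log T)
    (r0 r1 : ℕ → ℝ)
    (hr : ∀ t, 1 ≤ t → t ≤ T →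
      r0 t ∈ Set.Icc (0 : ℝ) 1 ∧ r1 t ∈ Set.Icc (0 : ℝ) 1 ∧ r0 t - r1 t = Δ)
    (μseq : ℕ → Fin 2 → ℝ)
    (hinit : (∀ i, 0 ≤ μseq 1 i) ∧ ∑ i, μseq 1 i = 1)
    (hrec : ∀ t, 1 ≤ t → t ≤ T →
      μseq (t + 1) = Matrix.vecMul (μseq t) (Qmat p η (r0 t) (r1 t))) :
    Δ * ∑ t ∈ Finset.Icc 1 T, μseq t 1 ≤
      (1 / p) * (2 * Real.sqrt T + T / Real.log T) := by
  obtain ⟨hp0, hp1⟩ := hp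
  obtain ⟨hΔ0, hΔ1⟩ := hΔ
  have hT2 : (2:ℝ) ≤ (T:ℝ) := by exact_mod_cast hT
  have hT0 : (0:ℝ) < (T:ℝ) := by linarith
  have hlog0 : 0 < Real.log T := Real.log_pos (by linarith)
  have hη0 : 0 < η := by rw [hη]; positivity
  have hsqrt : Real.exp η = Real.sqrt T := by
    rw [hη, Real.sqrt_eq_rpow, Real.rpow_def_of_pos hT0]
    ring_nf
  obtain ⟨E, hE⟩ : ∃ x, x = Real.exp (-η * Δ) := ⟨_, rfl⟩
  have hE0 : 0 < E := hE ▸ Real.exp_pos _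
  have hE1 : E ≤ 1 := by rw [hE]; exact Real.exp_le_one_iff.mpr (by nlinarith)
  obtain ⟨m, hm⟩ : ∃ x, x = E / (p + E) := ⟨_, rfl⟩
  have hpE : 0 < p + E := by linarith
  have hm0 : 0 ≤ m := by rw [hm]; positivity
  have hm1 : m ≤ 1 := by rw [hm, div_le_one hpE]; linarith
  obtain ⟨γ, hγ⟩ : ∃ x, x = 1 - p * ((1/2) * Real.exp (-η)) := ⟨_, rfl⟩
  have hexpη0 : 0 < Real.exp (-η) := Real.exp_pos _
  have hexpη1 : Real.exp (-η) ≤ 1 := Real.exp_le_one_iff.mpr (by linarith)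
  have hγ1 : γ < 1 := by
    have : 0 < p * ((1/2) * Real.exp (-η)) := by positivity
    linarith [hγ]
  have hγ0 : 0 ≤ γ := by rw [hγ]; nlinarith
  -- main invariant
  have main : ∀ t, 1 ≤ t → t ≤ T + 1 →
      0 ≤ μseq t 0 ∧ 0 ≤ μseq t 1 ∧ μseq t 0 + μseq t 1 = 1 ∧
        |μseq t 1 - m| ≤ γ ^ (t - 1) := by
    intro t
    induction t with
    | zero => intro h; omega
    | succ n ih =>
      intro h1 h2
      rcases Nat.eq_zero_or_pos n with hn0 | hn1
      · subst hn0
        obtain ⟨hnn, hsum⟩ := hinit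
        rw [Fin.sum_univ_two] at hsum
        refine ⟨hnn 0, hnn 1, hsum, ?_⟩
        have h01 : μseq 1 1 ≤ 1 := by have := hnn 0; linarith
        simp only [Nat.sub_self, pow_zero]
        rw [abs_le]
        constructor
        · linarith [hnn 1]
        · linarith
      · have hnT : n ≤ T := by omega
        obtain ⟨h0, h1', hsum, habs⟩ := ih hn1 (by omega)
        obtain ⟨⟨hr00, hr01⟩, ⟨hr10, hr11⟩, hgap⟩ := hr n hn1 hnT
        obtain ⟨q0, hq0⟩ : ∃ x, x = (1/2) * Real.exp (-η * r0 n) := ⟨_, rfl⟩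
        obtain ⟨q1, hq1⟩ : ∃ x, x = (1/2) * Real.exp (-η * r1 n) := ⟨_, rfl⟩
        have hq0pos : 0 < q0 := by rw [hq0]; positivity
        have hq1pos : 0 < q1 := by rw [hq1]; positivity
        have hq0le : q0 ≤ 1/2 := by
          have : Real.exp (-η * r0 n) ≤ 1 := Real.exp_le_one_iff.mpr (by nlinarith)
          rw [hq0]; linarith
        have hq1le : q1 ≤ 1/2 := by
          have : Real.exp (-η * r1 n) ≤ 1 := Real.exp_le_one_iff.mpr (by nlinarith)
          rw [hq1]; linarith
        have hq1ge : (1/2) * Real.exp (-η) ≤ q1 := by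
          have : Real.exp (-η) ≤ Real.exp (-η * r1 n) :=
            Real.exp_le_exp.mpr (by nlinarith)
          rw [hq1]; linarith
        have hq0q1 : q0 = q1 * E := by
          have h : r0 n = r1 n + Δ := by linarith
          rw [hq0, hq1, hE, h,
            show -η * (r1 n + Δ) = (-η * r1 n) + (-η * Δ) from by ring,
            Real.exp_add]
          ring
        have e1 : μseq (n+1) 1 = μseq n 0 * q0 + μseq n 1 * (1 - p * q1) := by
          rw [hrec n hn1 hnT, hq0, hq1]
          simp [Qmat, Matrix.vecMul, dotProduct, Fin.sum_univ_two]
        have e0 : μseq (n+1) 0 = μseq n 0 * (1 - q0) + μseq n 1 * (p * q1) := by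
          rw [hrec n hn1 hnT, hq0, hq1]
          simp [Qmat, Matrix.vecMul, dotProduct, Fin.sum_univ_two]
        have hpq1 : p * q1 ≤ 1/2 := by nlinarith
        refine ⟨?_, ?_, ?_, ?_⟩
        · rw [e0]
          have h00 : 0 ≤ μseq n 0 * (1 - q0) := by nlinarith
          have h11 : 0 ≤ μseq n 1 * (p * q1) := by positivity
          linarith
        · rw [e1]
          have h00 : 0 ≤ μseq n 0 * q0 := by positivity
          have h11 : 0 ≤ μseq n 1 * (1 - p * q1) := by nlinarith
          linarith
        · rw [e0, e1]; linear_combination hsum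
        · have hstat : (1 - m) * q0 = m * (p * q1) := by
            rw [hq0q1, hm]
            field_simp
            ring
          have key : μseq (n+1) 1 - m = (μseq n 1 - m) * (1 - q0 - p * q1) := by
            have hx0 : μseq n 0 = 1 - μseq n 1 := by linarith
            rw [e1, hx0]
            linear_combination hstat
          have hfac0 : 0 ≤ 1 - q0 - p * q1 := by linarith
          have hfacγ : 1 - q0 - p * q1 ≤ γ := by
            rw [hγ]; nlinarith
          rw [key, abs_mul, abs_of_nonneg hfac0]
          calc |μseq n 1 - m| * (1 - q0 - p * q1) ≤ γ ^ (n-1) * γ := by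
                apply mul_le_mul habs hfacγ hfac0 (pow_nonneg hγ0 _)
            _ = γ ^ (n - 1 + 1) := (pow_succ γ (n-1)).symm
            _ = γ ^ (n + 1 - 1) := by congr 1; omega
  -- sum bound
  have hsum1 : ∑ t ∈ Finset.Icc 1 T, μseq t 1 ≤
      (T:ℝ) * m + ∑ i ∈ Finset.range T, γ ^ i := by
    have step1 : ∑ t ∈ Finset.Icc 1 T, μseq t 1 ≤
        ∑ t ∈ Finset.Icc 1 T, (m + γ ^ (t-1)) := by
      apply Finset.sum_le_sum
      intro t ht
      rw [Finset.mem_Icc] at ht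
      obtain ⟨_, _, _, habs⟩ := main t ht.1 (by omega)
      have := abs_le.mp habs
      linarith [this.2]
    have step2 : ∑ t ∈ Finset.Icc 1 T, (m + γ ^ (t-1)) =
        (T:ℝ) * m + ∑ i ∈ Finset.range T, γ ^ i := by
      rw [Finset.sum_add_distrib, Finset.sum_const, Nat.card_Icc]
      congr 1
      · simp [nsmul_eq_mul]
      · rw [← Finset.Ico_add_one_right_eq_Icc, Finset.sum_Ico_eq_sum_range]
        simp
    linarith [step2 ▸ step1]
  have hgeom : ∑ i ∈ Finset.range T, γ ^ i ≤ 1 / (1 - γ) := by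
    have h1γ : 0 < 1 - γ := by linarith
    have hγT : 0 ≤ γ ^ T := pow_nonneg hγ0 T
    calc ∑ i ∈ Finset.range T, γ ^ i = (γ ^ T - 1) / (γ - 1) := geom_sum_eq hγ1.ne T
      _ = (1 - γ ^ T) / (1 - γ) := by rw [← neg_div_neg_eq]; ring_nf
      _ ≤ 1 / (1 - γ) := by
          gcongr
          linarith
  -- key small-gap inequality : Δ * E ≤ 1 / log T
  have hΔE : Δ * E ≤ 1 / Real.log T := by
    obtain ⟨a, ha⟩ : ∃ x, x = η * Δ := ⟨_, rfl⟩
    have ha0 : 0 ≤ a := by rw [ha]; positivity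
    have h2a : 2 * a ≤ Real.exp a := by
      have h1 := Real.add_one_le_exp (a/2)
      have h2 : Real.exp (a/2) * Real.exp (a/2) = Real.exp a := by
        rw [← Real.exp_add]; ring_nf
      nlinarith [Real.exp_pos (a/2), sq_nonneg (a/2 - 1)]
    have hEa : E = Real.exp (-a) := by rw [hE, ha]; ring_nf
    have hprod : Real.exp (-a) * Real.exp a = 1 := by
      rw [← Real.exp_add]; simp
    have h2η : 2 * η = Real.log T := by rw [hη]; ring
    rw [← h2η, le_div_iff₀ (by linarith : (0:ℝ) < 2*η), hEa]
    have hexpa : 0 < Real.exp (-a) := Real.exp_pos _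
    have hmm := mul_le_mul_of_nonneg_right h2a hexpa.le
    calc Δ * Real.exp (-a) * (2*η) = 2 * a * Real.exp (-a) := by rw [ha]; ring
      _ ≤ Real.exp a * Real.exp (-a) := hmm
      _ = 1 := by rw [mul_comm]; exact hprod
  -- assemble
  have hmE : m ≤ E / p := by
    rw [hm]
    gcongr
    linarith
  have hinv : 1 / (1 - γ) = 2 * Real.sqrt T / p := by
    rw [hγ, ← hsqrt]
    have h1 : Real.exp (-η) * Real.exp η = 1 := by rw [← Real.exp_add]; simp
    field_simp
    nlinarith [h1]
  have hS0 : 0 ≤ ∑ t ∈ Finset.Icc 1 T, μseq t 1 := by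
    apply Finset.sum_nonneg
    intro t ht
    rw [Finset.mem_Icc] at ht
    exact (main t ht.1 (by omega)).2.1
  have hsqT : 0 ≤ Real.sqrt T := Real.sqrt_nonneg _
  have h2 : ∑ t ∈ Finset.Icc 1 T, μseq t 1 ≤ (T:ℝ) * m + 2 * Real.sqrt T / p := by
    rw [← hinv]; linarith
  calc Δ * ∑ t ∈ Finset.Icc 1 T, μseq t 1
      ≤ Δ * ((T:ℝ) * m + 2 * Real.sqrt T / p) := by
        apply mul_le_mul_of_nonneg_left h2 hΔ0
    _ = (T:ℝ) * (Δ * m) + Δ * (2 * Real.sqrt T / p) := by ring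
    _ ≤ (T:ℝ) * ((Δ * E) / p) + 1 * (2 * Real.sqrt T / p) := by
        have hb1 : Δ * m ≤ (Δ * E) / p := by
          calc Δ * m ≤ Δ * (E / p) := mul_le_mul_of_nonneg_left hmE hΔ0
            _ = (Δ * E) / p := by ring
        have hb2 : Δ * (2 * Real.sqrt T / p) ≤ 1 * (2 * Real.sqrt T / p) := by
          apply mul_le_mul_of_nonneg_right hΔ1
          positivity
        have hb3 := mul_le_mul_of_nonneg_left hb1 hT0.le
        linarith
    _ ≤ (T:ℝ) * ((1 / Real.log T) / p) + 1 * (2 * Real.sqrt T / p) := by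
        gcongr
    _ = (1 / p) * (2 * Real.sqrt T + (T:ℝ) / Real.log T) := by
        field_simp
        ring
end

section
/- Let L be a positive integer and let f : {1,…,L} → {1,…,2^L}. Suppose there exist indices i₁ < i₂ < … < i_ℓ in {1,…,L} with ℓ ≥ (4/5)·L and f(i₁) ≤ f(i₂) ≤ … ≤ f(i_ℓ). Then the number of indices i ∈ {1,…,L−1} satisfying f(i) ≤ f(i+1) ≤ 4·f(i) is at least L/10 − 1. -/
/-!
The positions `i₁ < ⋯ < i_ℓ` of the subsequence form a set `S ⊆ {1,…,L}` with `ℓ ≥ 4L/5`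
elements, and at least `2ℓ - L - 1` of its elements `i` have `i + 1 ∈ S` too, since every other
element ends a run of `S` and the runs are separated by the `L - ℓ` missing points. Such a pair
is dangerous unless `f` more than quadruples across it; as `f` is nondecreasing on `S` and
takes values in `[1, 2^L]`, that happens at most `L/2` times. This leaves at least
`2ℓ - 3L/2 - 1 ≥ L/10 - 1` dangerous pairs.
-/

open Finset

theorem two_mul_card_le_card_filter_succ_mem {S : Finset ℕ} {n : ℕ} (hS : S ⊆ Icc 1 n) :
    2 * #S ≤ #{i ∈ S | i + 1 ∈ S} + n + 1 := by
  have hS' : S ⊆ Icc 1 (n + 1) := hS.trans (Icc_subset_Icc_right n.le_succ)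
  have hends : #{i ∈ S | i + 1 ∉ S} ≤ #(Icc 1 (n + 1) \ S) := by
    refine card_le_card_of_injOn (· + 1) (fun i hi => ?_) (fun i _ j _ h => Nat.succ_injective h)
    simp only [coe_filter, Set.mem_ofPred_eq] at hi
    have := mem_Icc.mp (hS hi.1)
    simp only [coe_sdiff, coe_Icc, Set.mem_sdiff, Set.mem_Icc, mem_coe]
    exact ⟨⟨by omega, by omega⟩, hi.2⟩
  rw [card_sdiff_of_subset hS', Nat.card_Icc] at hends
  have hcard : #S ≤ n + 1 := by simpa using card_le_card hS'
  have := card_filter_add_card_filter_not (s := S) (fun i => i + 1 ∈ S)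
  omega

def jumps (c : ℕ) (f : ℕ → ℕ) (T : Finset ℕ) : Finset ℕ :=
  {i ∈ T | i + 1 ∈ T ∧ c * f i < f (i + 1)}

theorem jumps_subset (c : ℕ) (f : ℕ → ℕ) (T : Finset ℕ) : jumps c f T ⊆ T :=
  filter_subset _ _

theorem jumps_insert_of_lt {c x : ℕ} {f : ℕ → ℕ} {T : Finset ℕ} (hxT : ∀ i ∈ T, x < i) :
    jumps c f (insert x T) =
      if x + 1 ∈ T ∧ c * f x < f (x + 1) then insert x (jumps c f T) else jumps c f T := by
  have hx : x + 1 ∈ insert x T ↔ x + 1 ∈ T := by simp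
  have hT : ∀ i ∈ T, (i + 1 ∈ insert x T ↔ i + 1 ∈ T) := fun i hi => by
    have := hxT i hi
    simp only [mem_insert, or_iff_right_iff_imp]
    omega
  rw [jumps, filter_insert, filter_congr (fun i hi => by rw [hT i hi])]
  simp only [hx, jumps]

theorem mul_pow_card_jumps_le {c y z : ℕ} {f : ℕ → ℕ} {T : Finset ℕ} (hf : MonotoneOn f T)
    (hy : ∀ i ∈ T, y ≤ f i) (hz : ∀ i ∈ T, f i ≤ z) (hyz : y ≤ z) :
    y * c ^ #(jumps c f T) ≤ z := by
  induction T using Finset.induction_on_min generalizing y with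
  | empty => simpa [jumps] using hyz
  | insert x T hxT ih =>
    have hf' : MonotoneOn f T := hf.mono (subset_insert x T)
    have hz' : ∀ i ∈ T, f i ≤ z := fun i hi => hz i (mem_insert_of_mem hi)
    rw [jumps_insert_of_lt hxT]
    split_ifs with hjump
    · rw [card_insert_of_notMem (fun h => lt_irrefl x (hxT x (jumps_subset c f T h))), pow_succ]
      have hT : ∀ i ∈ T, f (x + 1) ≤ f i := fun i hi =>
        hf (mem_insert_of_mem hjump.1) (mem_insert_of_mem hi) (hxT i hi)
      calc y * (c ^ #(jumps c f T) * c) = y * c * c ^ #(jumps c f T) := by ring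
        _ ≤ f (x + 1) * c ^ #(jumps c f T) := by
          gcongr
          calc y * c ≤ f x * c := Nat.mul_le_mul_right c (hy x (mem_insert_self x T))
            _ ≤ f (x + 1) := by linarith [hjump.2]
        _ ≤ z := ih hf' hT hz' (hz' _ hjump.1)
    · exact ih hf' (fun i hi => hy i (mem_insert_of_mem hi)) hz' hyz

theorem two_mul_card_jumps_four_le {f : ℕ → ℕ} {T : Finset ℕ} {L : ℕ} (hf : MonotoneOn f T)
    (hbound : ∀ i ∈ T, 1 ≤ f i ∧ f i ≤ 2 ^ L) : 2 * #(jumps 4 f T) ≤ L := by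
  have h := mul_pow_card_jumps_le (c := 4) hf (fun i hi => (hbound i hi).1)
    (fun i hi => (hbound i hi).2) Nat.one_le_two_pow
  rw [one_mul, show 4 = 2 ^ 2 by rfl, ← pow_mul] at h
  exact (Nat.pow_le_pow_iff_right one_lt_two).mp h

theorem filter_succ_mem_subset_union_jumps {c L : ℕ} {f : ℕ → ℕ} {S : Finset ℕ}
    (hS : S ⊆ Icc 1 L) (hf : MonotoneOn f S) :
    {i ∈ S | i + 1 ∈ S} ⊆
      {i ∈ Icc 1 (L - 1) | f i ≤ f (i + 1) ∧ f (i + 1) ≤ c * f i} ∪ jumps c f S := by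
  intro i hi
  obtain ⟨hi, hi1⟩ := mem_filter.mp hi
  by_cases hjump : c * f i < f (i + 1)
  · exact mem_union_right _ (mem_filter.mpr ⟨hi, hi1, hjump⟩)
  · have := mem_Icc.mp (hS hi)
    have := mem_Icc.mp (hS hi1)
    exact mem_union_left _
      (mem_filter.mpr ⟨mem_Icc.mpr ⟨by omega, by omega⟩, hf hi hi1 (by omega), by omega⟩)

theorem StrictMono.monotoneOn_range_of_monotone_comp {α β γ : Type*} [LinearOrder α]
    [Preorder β] [Preorder γ] {g : α → β} {f : β → γ} (hg : StrictMono g)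
    (hfg : Monotone (f ∘ g)) : MonotoneOn f (Set.range g) := by
  rintro _ ⟨a, rfl⟩ _ ⟨b, rfl⟩ hab
  exact hfg (hg.le_iff_le.mp hab)

theorem many_dangerous_pairs_general (L : ℕ) (f : ℕ → ℕ)
    (hf : ∀ i, 1 ≤ i → i ≤ L → 1 ≤ f i ∧ f i ≤ 2 ^ L)
    (hLIS : ∃ (ℓ : ℕ) (g : Fin ℓ → ℕ), (4 / 5 : ℝ) * L ≤ ℓ ∧ StrictMono g ∧
      (∀ a, 1 ≤ g a ∧ g a ≤ L) ∧ (∀ a b, a ≤ b → f (g a) ≤ f (g b))) :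
    (L : ℝ) / 10 - 1 ≤
      (((Finset.Icc 1 (L - 1)).filter
        (fun i => f i ≤ f (i + 1) ∧ f (i + 1) ≤ 4 * f i)).card : ℝ) := by
  obtain ⟨ℓ, g, hℓ, hg, hgL, hfg⟩ := hLIS
  set S := univ.image g
  have hSL : S ⊆ Icc 1 L := image_subset_iff.mpr fun a _ => mem_Icc.mpr (hgL a)
  have hcard : #S = ℓ := by
    rw [card_image_of_injective _ hg.injective, card_univ, Fintype.card_fin]
  have hfS : MonotoneOn f S := by
    simpa [S] using hg.monotoneOn_range_of_monotone_comp hfg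
  have hadj := two_mul_card_le_card_filter_succ_mem hSL
  have hjumps := two_mul_card_jumps_four_le hfS fun i hi =>
    hf i (mem_Icc.mp (hSL hi)).1 (mem_Icc.mp (hSL hi)).2
  have hpairs := (card_le_card (filter_succ_mem_subset_union_jumps (c := 4) hSL hfS)).trans
    (card_union_le _ _)
  have hcount : (4 * ℓ : ℝ) ≤ 2 * #((Finset.Icc 1 (L - 1)).filter
      (fun i => f i ≤ f (i + 1) ∧ f (i + 1) ≤ 4 * f i)) + 3 * L + 2 := by
    exact_mod_cast (by omega : 4 * ℓ ≤ _)
  linarith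

/-- If `f : {1,…,L} → {1,…,2^L}` has a nondecreasing subsequence of length at
least `(4/5)L`, then the number of indices `i ∈ {1,…,L-1}` with
`f(i) ≤ f(i+1) ≤ 4 f(i)` is at least `L/10 - 1`. -/
theorem many_dangerous_pairs (L : ℕ) (hL : 0 < L) (f : ℕ → ℕ)
    (hf : ∀ i, 1 ≤ i → i ≤ L → 1 ≤ f i ∧ f i ≤ 2 ^ L)
    (hLIS : ∃ (ℓ : ℕ) (g : Fin ℓ → ℕ), (4 / 5 : ℝ) * L ≤ ℓ ∧ StrictMono g ∧
      (∀ a, 1 ≤ g a ∧ g a ≤ L) ∧ (∀ a b, a ≤ b → f (g a) ≤ f (g b))) :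
    (L : ℝ) / 10 - 1 ≤
      (((Finset.Icc 1 (L - 1)).filter
        (fun i => f i ≤ f (i + 1) ∧ f (i + 1) ≤ 4 * f i)).card : ℝ) :=
  many_dangerous_pairs_general L f hf hLIS
end

section
/- Let L be a positive integer and let f : {1,…,L} → ℕ. Suppose every nondecreasing subsequence of f has length less than (4/5)·L, i.e., there are no indices i₁ < … < i_m with m ≥ (4/5)·L and f(i₁) ≤ … ≤ f(i_m). Then there are at least L/10 pairs (i,j) with 1 ≤ i < j ≤ L such that f(j) < f(i) and (i,j) is an MT-pair. -/
open scoped Classical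

/-- `(k₁, k₀)` with `1 ≤ k₁ < k₀` is an MT-pair if `k₀ - k₁ ≤ 2^r` where
`r = max(ν₂(k₁), ν₂(k₀))` and `ν₂` is the 2-adic valuation. -/
def MTpair (k1 k0 : ℕ) : Prop :=
  1 ≤ k1 ∧ k1 < k0 ∧ k0 - k1 ≤ 2 ^ max (padicValNat 2 k1) (padicValNat 2 k0)

private lemma odd_cofactor {m : ℕ} (hm : m ≠ 0) :
    ∃ c, m = 2 ^ (padicValNat 2 m) * (2 * c + 1) := by
  obtain ⟨q, hq⟩ := (pow_padicValNat_dvd : 2 ^ padicValNat 2 m ∣ m)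
  have hnd : ¬ 2 ^ (padicValNat 2 m + 1) ∣ m := pow_succ_padicValNat_not_dvd hm
  set r := padicValNat 2 m with hr
  have hq2 : ¬ 2 ∣ q := by
    rintro ⟨c, hc⟩
    exact hnd ⟨c, by rw [hq, hc, pow_succ]; ring⟩
  obtain ⟨c, hc⟩ : ∃ c, q = 2 * c + 1 := ⟨q / 2, by omega⟩
  exact ⟨c, by rw [hq, hc]⟩

private lemma val_succ_dvd {m : ℕ} (hm : m ≠ 0) :
    2 ^ (padicValNat 2 m + 1) ∣ m + 2 ^ padicValNat 2 m := by
  obtain ⟨c, hc⟩ := odd_cofactor hm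
  set r := padicValNat 2 m with hr
  exact ⟨c + 1, by rw [hc, pow_succ]; ring⟩

private lemma val_sub_dvd {m : ℕ} (hm : m ≠ 0) :
    2 ^ (padicValNat 2 m + 1) ∣ m - 2 ^ padicValNat 2 m := by
  obtain ⟨c, hc⟩ := odd_cofactor hm
  set r := padicValNat 2 m with hr
  refine ⟨c, ?_⟩
  have h2 : m = 2 ^ (r + 1) * c + 2 ^ r := by rw [hc, pow_succ]; ring
  omega

/-- For any `1 ≤ i < j` there is `m ∈ [i, j]` (of maximal 2-adic valuation)
such that `(i, m)` and `(m, j)` are MT-pairs whenever the inequalities are strict. -/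
theorem mt_chain {i j : ℕ} (hi : 1 ≤ i) (hij : i < j) :
    ∃ m, i ≤ m ∧ m ≤ j ∧ (i < m → MTpair i m) ∧ (m < j → MTpair m j) := by
  obtain ⟨m, hm, hmax⟩ := (Finset.Icc i j).exists_max_image (padicValNat 2)
    ⟨i, Finset.mem_Icc.2 ⟨le_refl i, le_of_lt hij⟩⟩
  rw [Finset.mem_Icc] at hm
  have hm0 : m ≠ 0 := by omega
  have hub : ∀ x, i ≤ x → x ≤ j → padicValNat 2 x ≤ padicValNat 2 m := by
    intro x h1 h2
    exact hmax x (Finset.mem_Icc.2 ⟨h1, h2⟩)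
  have hp : 0 < 2 ^ padicValNat 2 m := pow_pos (by norm_num) _
  have hjm : j - m ≤ 2 ^ padicValNat 2 m := by
    by_contra hcon
    push_neg at hcon
    have hx0 : m + 2 ^ padicValNat 2 m ≠ 0 := by omega
    have hvx : padicValNat 2 m + 1 ≤ padicValNat 2 (m + 2 ^ padicValNat 2 m) :=
      (padicValNat_dvd_iff_le hx0).1 (val_succ_dvd hm0)
    have := hub (m + 2 ^ padicValNat 2 m) (by omega) (by omega)
    omega
  have hmi : m - i ≤ 2 ^ padicValNat 2 m := by
    by_contra hcon
    push_neg at hcon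
    have hx0 : m - 2 ^ padicValNat 2 m ≠ 0 := by omega
    have hvx : padicValNat 2 m + 1 ≤ padicValNat 2 (m - 2 ^ padicValNat 2 m) :=
      (padicValNat_dvd_iff_le hx0).1 (val_sub_dvd hm0)
    have := hub (m - 2 ^ padicValNat 2 m) (by omega) (by omega)
    omega
  exact ⟨m, hm.1, hm.2,
    fun h => ⟨hi, h, le_trans hmi (Nat.pow_le_pow_right (by norm_num) (le_max_right _ _))⟩,
    fun h => ⟨by omega, h, le_trans hjm (Nat.pow_le_pow_right (by norm_num) (le_max_left _ _))⟩⟩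

/-- If every nondecreasing subsequence of `f` on `{1,…,L}` has length less than
`(4/5)L`, then there are at least `L/10` decreasing MT-pairs `(i,j)` with
`1 ≤ i < j ≤ L` and `f(j) < f(i)`. -/
theorem many_decreasing_MT_pairs (L : ℕ) (hL : 0 < L) (f : ℕ → ℕ)
    (hLIS : ∀ (m : ℕ) (g : Fin m → ℕ), StrictMono g →
      (∀ a, 1 ≤ g a ∧ g a ≤ L) → (∀ a b, a ≤ b → f (g a) ≤ f (g b)) →
      (m : ℝ) < (4 / 5 : ℝ) * L) :
    (L : ℝ) / 10 ≤
      (((Finset.Icc 1 L ×ˢ Finset.Icc 1 L).filter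
        (fun q => q.1 < q.2 ∧ f q.2 < f q.1 ∧ MTpair q.1 q.2)).card : ℝ) := by
  set D := (Finset.Icc 1 L ×ˢ Finset.Icc 1 L).filter
      (fun q => q.1 < q.2 ∧ f q.2 < f q.1 ∧ MTpair q.1 q.2) with hD
  set E := D.image Prod.fst ∪ D.image Prod.snd with hE
  set S := Finset.Icc 1 L \ E with hS
  have hmemD : ∀ a b : ℕ, 1 ≤ a → b ≤ L → a < b → f b < f a → MTpair a b → (a, b) ∈ D := by
    intro a b ha hb hab hf hmt
    rw [hD, Finset.mem_filter, Finset.mem_product, Finset.mem_Icc, Finset.mem_Icc]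
    exact ⟨⟨⟨ha, by omega⟩, ⟨by omega, hb⟩⟩, hab, hf, hmt⟩
  have hmono : ∀ x ∈ S, ∀ y ∈ S, x ≤ y → f x ≤ f y := by
    intro x hx y hy hxy
    by_contra hcon
    push_neg at hcon
    obtain ⟨hxI, hxE⟩ := Finset.mem_sdiff.1 hx
    obtain ⟨hyI, hyE⟩ := Finset.mem_sdiff.1 hy
    rw [Finset.mem_Icc] at hxI hyI
    have hxlt : x < y := lt_of_le_of_ne hxy (by rintro rfl; omega)
    obtain ⟨m, h1, h2, h3, h4⟩ := mt_chain hxI.1 hxlt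
    by_cases hfm : f m < f x
    · rcases eq_or_lt_of_le h1 with rfl | hlt
      · omega
      · exact hxE (Finset.mem_union_left _ (Finset.mem_image.2
          ⟨(x, m), hmemD x m hxI.1 (by omega) hlt hfm (h3 hlt), rfl⟩))
    · have hfm' : f y < f m := lt_of_lt_of_le hcon (not_lt.1 hfm)
      rcases eq_or_lt_of_le h2 with rfl | hlt
      · omega
      · exact hyE (Finset.mem_union_right _ (Finset.mem_image.2
          ⟨(m, y), hmemD m y (by omega) hyI.2 hlt hfm' (h4 hlt), rfl⟩))
  have hgmem : ∀ a : Fin S.card, S.orderEmbOfFin rfl a ∈ S :=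
    fun a => S.orderEmbOfFin_mem rfl a
  have hScard : (S.card : ℝ) < (4 / 5 : ℝ) * L := by
    refine hLIS S.card (fun a => S.orderEmbOfFin rfl a) (S.orderEmbOfFin rfl).strictMono
      (fun a => ?_) (fun a b hab => ?_)
    · have := (Finset.mem_sdiff.1 (hgmem a)).1
      rw [Finset.mem_Icc] at this
      exact this
    · exact hmono _ (hgmem a) _ (hgmem b) ((S.orderEmbOfFin rfl).monotone hab)
  have h1 : L ≤ S.card + E.card := by
    have := Finset.card_le_card_sdiff_add_card (s := Finset.Icc 1 L) (t := E)
    simpa [Nat.card_Icc] using this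
  have h2 : E.card ≤ 2 * D.card := by
    rw [hE]
    have := Finset.card_union_le (D.image Prod.fst) (D.image Prod.snd)
    have hf1 := Finset.card_image_le (s := D) (f := Prod.fst)
    have hf2 := Finset.card_image_le (s := D) (f := Prod.snd)
    omega
  have h3 : (L : ℝ) ≤ (S.card : ℝ) + 2 * (D.card : ℝ) := by
    have : (L : ℝ) ≤ ((S.card + 2 * D.card : ℕ) : ℝ) := by exact_mod_cast by omega
    push_cast at this
    linarith
  linarith
end

section
/- For every positive integer L and every integer r ≥ 0, the number of MT-pairs (k₁,k₀) with 1 ≤ k₁ < k₀ ≤ L and 2^{r−1} < k₀ − k₁ ≤ 2^r is at most L. -/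
open scoped Classical

/-!
A pair in class `r` has `2^(r-1) < k₀ - k₁ ≤ 2^max(ν₂ k₁, ν₂ k₀)`, so one of its endpoints is a
multiple of `2^r`. A pair is determined by one endpoint and its difference, so for `r ≥ 1` there
are at most `L / 2^r` choices of the divisible endpoint, two choices of which endpoint it is and
`2^(r-1)` choices of the difference: at most `L / 2^r * 2^r ≤ L` pairs. In class `0` the
difference is `1` and the pair is determined by `k₀`.
-/

namespace MTpair

theorem two_pow_dvd_or {k1 k0 r : ℕ} (h : MTpair k1 k0) (hr : 2 ^ r < 2 * (k0 - k1)) :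
    2 ^ r ∣ k1 ∨ 2 ^ r ∣ k0 := by
  have hlt : 2 ^ r < 2 ^ (max (padicValNat 2 k1) (padicValNat 2 k0) + 1) := by
    rw [pow_succ]
    linarith [h.2.2]
  have hle := Nat.le_of_lt_succ <| (Nat.pow_lt_pow_iff_right (by norm_num)).mp hlt
  rcases le_max_iff.mp hle with h1 | h0
  · exact .inl ((pow_dvd_pow 2 h1).trans pow_padicValNat_dvd)
  · exact .inr ((pow_dvd_pow 2 h0).trans pow_padicValNat_dvd)

end MTpair

theorem two_zpow_natCast_sub_one_lt_iff {r : ℕ} {x : ℝ} :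
    (2 : ℝ) ^ ((r : ℤ) - 1) < x ↔ 2 ^ r < 2 * x := by
  rw [zpow_sub_one₀ two_ne_zero, zpow_natCast, ← div_eq_mul_inv, div_lt_iff₀' two_pos]

section PairsByEndpointAndDifference

variable {s : Finset (ℕ × ℕ)} {M D : Finset ℕ}

theorem card_le_mul_of_fst_mem (h : ∀ q ∈ s, q.1 ≤ q.2 ∧ q.1 ∈ M ∧ q.2 - q.1 ∈ D) :
    s.card ≤ M.card * D.card := by
  rw [← Finset.card_product]
  refine Finset.card_le_card_of_injOn (fun q => (q.1, q.2 - q.1)) ?_ ?_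
  · intro q hq
    simp only [Finset.coe_product, Set.mem_prod, Finset.mem_coe]
    exact ⟨(h q hq).2.1, (h q hq).2.2⟩
  · intro q hq q' hq' hqq'
    simp only [Prod.mk.injEq] at hqq'
    have := (h q hq).1
    have := (h q' hq').1
    ext <;> omega

theorem card_le_mul_of_snd_mem (h : ∀ q ∈ s, q.1 ≤ q.2 ∧ q.2 ∈ M ∧ q.2 - q.1 ∈ D) :
    s.card ≤ M.card * D.card := by
  rw [← Finset.card_product]
  refine Finset.card_le_card_of_injOn (fun q => (q.2, q.2 - q.1)) ?_ ?_
  · intro q hq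
    simp only [Finset.coe_product, Set.mem_prod, Finset.mem_coe]
    exact ⟨(h q hq).2.1, (h q hq).2.2⟩
  · intro q hq q' hq' hqq'
    simp only [Prod.mk.injEq] at hqq'
    have := (h q hq).1
    have := (h q' hq').1
    ext <;> omega

theorem card_le_of_endpoint_dvd {L t : ℕ}
    (h : ∀ q ∈ s, 0 < q.1 ∧ q.1 ≤ q.2 ∧ q.2 ≤ L ∧ q.2 - q.1 ∈ D ∧ (t ∣ q.1 ∨ t ∣ q.2)) :
    s.card ≤ 2 * (L / t) * D.card := by
  set M := (Finset.Ioc 0 L).filter (t ∣ ·)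
  have hM : M.card = L / t := Nat.Ioc_filter_dvd_card_eq_div L t
  have hsnd : (s.filter (t ∣ ·.2)).card ≤ M.card * D.card := by
    refine card_le_mul_of_snd_mem fun q hq => ?_
    obtain ⟨hq, hdvd⟩ := Finset.mem_filter.mp hq
    obtain ⟨h1, h12, h2, hD, -⟩ := h q hq
    exact ⟨h12, Finset.mem_filter.mpr ⟨Finset.mem_Ioc.mpr ⟨by omega, h2⟩, hdvd⟩, hD⟩
  have hfst : (s.filter (¬ t ∣ ·.2)).card ≤ M.card * D.card := by
    refine card_le_mul_of_fst_mem fun q hq => ?_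
    obtain ⟨hq, hndvd⟩ := Finset.mem_filter.mp hq
    obtain ⟨h1, h12, h2, hD, hdvd⟩ := h q hq
    exact ⟨h12, Finset.mem_filter.mpr ⟨Finset.mem_Ioc.mpr ⟨h1, by omega⟩,
      hdvd.resolve_right hndvd⟩, hD⟩
  rw [← Finset.card_filter_add_card_filter_not (t ∣ ·.2)]
  rw [hM] at hsnd hfst
  linarith

theorem card_le_of_pow_dvd_endpoint {L r : ℕ}
    (h : ∀ q ∈ s, 0 < q.1 ∧ q.2 ≤ L ∧ 2 ^ r < 2 * (q.2 - q.1) ∧ q.2 - q.1 ≤ 2 ^ r ∧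
      (2 ^ r ∣ q.1 ∨ 2 ^ r ∣ q.2)) :
    s.card ≤ L := by
  cases r with
  | zero =>
    simpa using card_le_mul_of_snd_mem (M := Finset.Icc 1 L) (D := {1}) fun q hq => by
      obtain ⟨h1, h2, hlo, hhi, -⟩ := h q hq
      simp only [Finset.mem_Icc, Finset.mem_singleton]
      omega
  | succ k =>
    have hD : (Finset.Ioc (2 ^ k) (2 ^ (k + 1))).card = 2 ^ k := by
      rw [Nat.card_Ioc, pow_succ]; omega
    calc s.card ≤ 2 * (L / 2 ^ (k + 1)) * 2 ^ k := by
          refine hD ▸ card_le_of_endpoint_dvd fun q hq => ?_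
          obtain ⟨h1, h2, hlo, hhi, hdvd⟩ := h q hq
          rw [pow_succ] at hlo
          exact ⟨h1, by omega, h2, Finset.mem_Ioc.mpr ⟨by omega, hhi⟩, hdvd⟩
      _ = L / 2 ^ (k + 1) * 2 ^ (k + 1) := by ring
      _ ≤ L := Nat.div_mul_le_self L _

end PairsByEndpointAndDifference

theorem MT_pairs_in_class_le_general (L : ℕ) (r : ℕ) :
    (((Finset.Icc 1 L ×ˢ Finset.Icc 1 L).filter
      (fun q => MTpair q.1 q.2 ∧
        (2 : ℝ) ^ ((r : ℤ) - 1) < ((q.2 - q.1 : ℕ) : ℝ) ∧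
        ((q.2 - q.1 : ℕ) : ℝ) ≤ 2 ^ r)).card : ℕ) ≤ L := by
  refine card_le_of_pow_dvd_endpoint (r := r) fun q hq => ?_
  simp only [Finset.mem_filter, Finset.mem_product, Finset.mem_Icc,
    two_zpow_natCast_sub_one_lt_iff] at hq
  obtain ⟨⟨-, -, h2⟩, hMT, hlo, hhi⟩ := hq
  have hlo : 2 ^ r < 2 * (q.2 - q.1) := by exact_mod_cast hlo
  exact ⟨hMT.1, h2, hlo, by exact_mod_cast hhi, hMT.two_pow_dvd_or hlo⟩

/-- For every `L ≥ 1` and `r ≥ 0`, the number of MT-pairs `(k₁, k₀)` with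
`1 ≤ k₁ < k₀ ≤ L` in class `r` (i.e. `2^{r-1} < k₀ - k₁ ≤ 2^r`) is at most `L`. -/
theorem MT_pairs_in_class_le (L : ℕ) (hL : 0 < L) (r : ℕ) :
    (((Finset.Icc 1 L ×ˢ Finset.Icc 1 L).filter
      (fun q => MTpair q.1 q.2 ∧
        (2 : ℝ) ^ ((r : ℤ) - 1) < ((q.2 - q.1 : ℕ) : ℝ) ∧
        ((q.2 - q.1 : ℕ) : ℝ) ≤ 2 ^ r)).card : ℕ) ≤ L :=
  MT_pairs_in_class_le_general L r
end
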